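/- arXiv:2305.17336 — 2 statements merged into one kernel-verified Lean document; each statement's English description precedes it below -/
import Mathlib

section
/- Let S be a p×n real matrix with orthonormal rows, and let H̄, Ĥ be symmetric matrices with H̄ ∈ ℝ^{n×n} and Ĥ ∈ ℝ^{p×p}. Then the unique minimizer of A ↦ ½‖A − H̄‖_F² over all A ∈ ℝ^{n×n} satisfying S A Sᵀ = Ĥ is A* = H̄ − Sᵀ S H̄ Sᵀ S + Sᵀ Ĥ S. -/
open Matrix

/-- Matrix sketch-and-project closed form: with `S` having orthonormal rows and
symmetric `H̄, Ĥ`, the unique minimizer of `½‖A − H̄‖_F²` subject to `S A Sᵀ = Ĥ`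
is `A* = H̄ − Sᵀ S H̄ Sᵀ S + Sᵀ Ĥ S`. -/
theorem hessian_sketch_and_project_closed_form {p n : ℕ}
    (S : Matrix (Fin p) (Fin n) ℝ) (hS : S * Sᵀ = 1)
    (Hbar : Matrix (Fin n) (Fin n) ℝ) (Hhat : Matrix (Fin p) (Fin p) ℝ)
    (hHbar : Hbar.IsSymm) (hHhat : Hhat.IsSymm) :
    let Astar : Matrix (Fin n) (Fin n) ℝ :=
      Hbar - Sᵀ * S * Hbar * Sᵀ * S + Sᵀ * Hhat * S
    S * Astar * Sᵀ = Hhat ∧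
      ∀ A : Matrix (Fin n) (Fin n) ℝ, S * A * Sᵀ = Hhat → A ≠ Astar →
        (1 / 2) * ∑ i, ∑ j, (Astar i j - Hbar i j) ^ 2 <
          (1 / 2) * ∑ i, ∑ j, (A i j - Hbar i j) ^ 2 := by
  intro Astar
  have hc : ∀ Z : Matrix (Fin p) (Fin p) ℝ, S * (Sᵀ * Z) = Z := by
    intro Z
    rw [← Matrix.mul_assoc, hS, Matrix.one_mul]
  have hfeas : S * Astar * Sᵀ = Hhat := by
    show S * (Hbar - Sᵀ * S * Hbar * Sᵀ * S + Sᵀ * Hhat * S) * Sᵀ = Hhat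
    simp only [Matrix.mul_sub, Matrix.sub_mul, Matrix.mul_add, Matrix.add_mul,
      Matrix.mul_assoc, hS, Matrix.mul_one, hc]
    abel
  refine ⟨hfeas, ?_⟩
  intro A hA hne
  set E : Matrix (Fin n) (Fin n) ℝ := A - Astar with hEdef
  have hD : Astar - Hbar = Sᵀ * (Hhat - S * Hbar * Sᵀ) * S := by
    show Hbar - Sᵀ * S * Hbar * Sᵀ * S + Sᵀ * Hhat * S - Hbar = _
    simp only [Matrix.mul_sub, Matrix.sub_mul, Matrix.mul_assoc]
    abel
  have hE0 : S * E * Sᵀ = 0 := by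
    simp only [hEdef, Matrix.mul_sub, Matrix.sub_mul, hA, hfeas, sub_self]
  have hcross : ∑ i, ∑ j, E i j * (Astar - Hbar) i j = 0 := by
    have h1 : ∑ i, ∑ j, E i j * (Astar - Hbar) i j
        = Matrix.trace ((Astar - Hbar) * Eᵀ) := by
      simp only [Matrix.trace, Matrix.diag, Matrix.mul_apply, Matrix.transpose_apply]
      congr 1; ext i; congr 1; ext j; ring
    rw [h1, hD]
    have h2 : Sᵀ * (Hhat - S * Hbar * Sᵀ) * S * Eᵀ
        = (Sᵀ * (Hhat - S * Hbar * Sᵀ)) * (S * Eᵀ) := by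
      rw [Matrix.mul_assoc]
    rw [h2, Matrix.trace_mul_comm]
    have h4 : S * Eᵀ * Sᵀ = 0 := by
      have := congrArg Matrix.transpose hE0
      simpa [Matrix.transpose_mul, Matrix.mul_assoc] using this
    simp only [← Matrix.mul_assoc]
    rw [h4, Matrix.zero_mul, Matrix.trace_zero]
  have hsum : ∑ i, ∑ j, (A i j - Hbar i j) ^ 2
      = ∑ i, ∑ j, (E i j) ^ 2 + 2 * (∑ i, ∑ j, E i j * (Astar - Hbar) i j)
        + ∑ i, ∑ j, (Astar i j - Hbar i j) ^ 2 := by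
    rw [Finset.mul_sum, ← Finset.sum_add_distrib, ← Finset.sum_add_distrib]
    congr 1; ext i
    rw [Finset.mul_sum, ← Finset.sum_add_distrib, ← Finset.sum_add_distrib]
    congr 1; ext j
    simp only [hEdef, Matrix.sub_apply]
    ring
  have hEne : E ≠ 0 := sub_ne_zero.mpr hne
  have hpos : 0 < ∑ i, ∑ j, (E i j) ^ 2 := by
    obtain ⟨i, j, hij⟩ : ∃ i j, E i j ≠ 0 := by
      by_contra h
      push_neg at h
      exact hEne (by ext i j; simpa using h i j)
    refine Finset.sum_pos' (fun i _ => Finset.sum_nonneg fun j _ => sq_nonneg _)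
      ⟨i, Finset.mem_univ i, Finset.sum_pos' (fun j _ => sq_nonneg _)
        ⟨j, Finset.mem_univ j, by positivity⟩⟩
  rw [hcross] at hsum
  linarith
end

section
/- Let Q ∈ ℝ^{n×n} be orthogonal with columns q¹,…,qⁿ, let π₁,…,πₙ ∈ (0,1], and let J be a random subset where i ∈ J with probability πᵢ independently. Suppose for each possible realization J one has a vector ĝ_J ∈ ℝⁿ satisfying ‖ĝ_J − v‖ ≤ ε for a fixed vector v ∈ ℝⁿ and ε ≥ 0. Define g̃ := ḡ − ∑_{i∈J} (1/πᵢ) qⁱ(qⁱ)ᵀ ḡ + ∑_{i∈J} (1/πᵢ) qⁱ(qⁱ)ᵀ ĝ_J for a fixed ḡ ∈ ℝⁿ. Then ‖E_J[g̃] − v‖ ≤ √n · ε. -/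
open Matrix

/-- Probability of realizing the subset `J` when each index `i` is included
independently with probability `π i`. -/
noncomputable def subsetWeight {n : ℕ} (π : Fin n → ℝ) (J : Finset (Fin n)) : ℝ :=
  (∏ i ∈ J, π i) * ∏ i ∈ Jᶜ, (1 - π i)

/-- `P(J) = ∑_{i ∈ J} (1/πᵢ) qⁱ (qⁱ)ᵀ`, built from the columns of `Q`. -/
noncomputable def sketchProj {n : ℕ} (Q : Matrix (Fin n) (Fin n) ℝ) (π : Fin n → ℝ)
    (J : Finset (Fin n)) : Matrix (Fin n) (Fin n) ℝ :=
  ∑ i ∈ J, (1 / π i) • Matrix.vecMulVec (fun r => Q r i) (fun r => Q r i)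

lemma weight_sum_aux {n : ℕ} (π : Fin n → ℝ) :
    ∑ J : Finset (Fin n), subsetWeight π J = 1 := by
  classical
  have h := Finset.prod_add π (fun i => 1 - π i) (Finset.univ : Finset (Fin n))
  have h1 : ∀ i : Fin n, π i + (1 - π i) = 1 := fun i => by ring
  simp only [h1, Finset.prod_const_one] at h
  rw [show (Finset.univ : Finset (Finset (Fin n))) = Finset.univ.powerset from
    Finset.powerset_univ.symm]
  unfold subsetWeight
  simp only [Finset.compl_eq_univ_sdiff]
  exact h.symm

lemma weight_mem_aux {n : ℕ} (π : Fin n → ℝ) (i : Fin n) :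
    ∑ J : Finset (Fin n), (if i ∈ J then subsetWeight π J else 0) = π i := by
  classical
  rw [show (Finset.univ : Finset (Finset (Fin n))) = Finset.univ.powerset from
    Finset.powerset_univ.symm,
    show (Finset.univ : Finset (Fin n)) = insert i (Finset.univ.erase i) from
      (Finset.insert_erase (Finset.mem_univ i)).symm,
    Finset.sum_powerset_insert (Finset.notMem_erase i _)]
  have h0 : ∑ t ∈ (Finset.univ.erase i).powerset,
      (if i ∈ t then subsetWeight π t else 0) = 0 := by
    refine Finset.sum_eq_zero fun t ht => ?_
    have : i ∉ t := fun hit => (Finset.notMem_erase i _) (Finset.mem_powerset.mp ht hit)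
    simp [this]
  rw [h0, zero_add]
  have hmain : ∀ t ∈ (Finset.univ.erase i).powerset,
      (if i ∈ insert i t then subsetWeight π (insert i t) else 0)
        = π i * ((∏ j ∈ t, π j) * ∏ j ∈ (Finset.univ.erase i) \ t, (1 - π j)) := by
    intro t ht
    have hit : i ∉ t := fun h => (Finset.notMem_erase i _) (Finset.mem_powerset.mp ht h)
    rw [if_pos (Finset.mem_insert_self i t)]
    unfold subsetWeight
    rw [Finset.prod_insert hit]
    have hc : (insert i t)ᶜ = (Finset.univ.erase i) \ t := by
      ext j
      simp only [Finset.mem_compl, Finset.mem_insert, Finset.mem_sdiff, Finset.mem_erase,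
        Finset.mem_univ, and_true, true_and]
      tauto
    rw [hc]; ring
  rw [Finset.sum_congr rfl hmain, ← Finset.mul_sum, ← Finset.prod_add]
  have h1 : ∀ j : Fin n, π j + (1 - π j) = 1 := fun j => by ring
  simp [h1]

lemma sum_mulVec_aux {n : ℕ} {ι : Type*} (s : Finset ι) (A : ι → Matrix (Fin n) (Fin n) ℝ)
    (x : Fin n → ℝ) : (∑ J ∈ s, A J).mulVec x = ∑ J ∈ s, (A J).mulVec x := by
  funext r
  simp only [Matrix.mulVec, dotProduct, Finset.sum_apply, Matrix.sum_apply,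
    Finset.sum_mul]
  exact Finset.sum_comm

lemma vecMulVec_mulVec_aux {n : ℕ} (w u x : Fin n → ℝ) :
    (Matrix.vecMulVec w u).mulVec x = (∑ s, u s * x s) • w := by
  funext r
  simp only [Matrix.mulVec, dotProduct, Matrix.vecMulVec_apply, Pi.smul_apply,
    smul_eq_mul]
  rw [Finset.sum_mul]
  exact Finset.sum_congr rfl fun s _ => by ring

lemma expProj_aux {n : ℕ} (Q : Matrix (Fin n) (Fin n) ℝ) (hQ : Qᵀ * Q = 1)
    (π : Fin n → ℝ) (hπ : ∀ i, 0 < π i ∧ π i ≤ 1) :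
    ∑ J : Finset (Fin n), subsetWeight π J • sketchProj Q π J = 1 := by
  classical
  have step1 : ∀ J : Finset (Fin n), subsetWeight π J • sketchProj Q π J
      = ∑ i : Fin n, (if i ∈ J then subsetWeight π J •
          ((1 / π i) • Matrix.vecMulVec (fun r => Q r i) (fun r => Q r i)) else 0) := by
    intro J
    unfold sketchProj
    rw [Finset.sum_ite_mem, Finset.univ_inter]
    exact Finset.smul_sum
  rw [Finset.sum_congr rfl fun J _ => step1 J, Finset.sum_comm]
  have step2 : ∀ i : Fin n, (∑ J : Finset (Fin n), if i ∈ J then subsetWeight π J •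
          ((1 / π i) • Matrix.vecMulVec (fun r => Q r i) (fun r => Q r i)) else 0)
      = Matrix.vecMulVec (fun r => Q r i) (fun r => Q r i) := by
    intro i
    have h1 : ∀ J : Finset (Fin n), (if i ∈ J then subsetWeight π J •
          ((1 / π i) • Matrix.vecMulVec (fun r => Q r i) (fun r => Q r i)) else 0)
        = (if i ∈ J then subsetWeight π J else 0) •
          ((1 / π i) • Matrix.vecMulVec (fun r => Q r i) (fun r => Q r i)) := by
      intro J; split <;> simp
    rw [Finset.sum_congr rfl fun J _ => h1 J, ← Finset.sum_smul, weight_mem_aux, smul_smul,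
      mul_one_div_cancel (ne_of_gt (hπ i).1), one_smul]
  rw [Finset.sum_congr rfl fun i _ => step2 i]
  have hQQ : ∑ i : Fin n, Matrix.vecMulVec (fun r => Q r i) (fun r => Q r i) = Q * Qᵀ := by
    ext r s
    simp [Matrix.sum_apply, Matrix.mul_apply, Matrix.vecMulVec_apply, Matrix.transpose_apply]
  rw [hQQ, mul_eq_one_comm.mp hQ]

/-- If every realization satisfies `‖ĝ_J − v‖ ≤ ε`, then the expectation of the
ameliorated estimator `g̃ = ḡ − P(J)ḡ + P(J)ĝ_J` satisfies `‖E_J[g̃] − v‖ ≤ √n ε`. -/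
theorem ameliorated_estimator_accuracy {n : ℕ}
    (Q : Matrix (Fin n) (Fin n) ℝ) (hQ : Qᵀ * Q = 1)
    (π : Fin n → ℝ) (hπ : ∀ i, 0 < π i ∧ π i ≤ 1)
    (gbar v : Fin n → ℝ) (ghat : Finset (Fin n) → Fin n → ℝ)
    (ε : ℝ) (hε : 0 ≤ ε)
    (hacc : ∀ J : Finset (Fin n), Real.sqrt (∑ r, (ghat J r - v r) ^ 2) ≤ ε) :
    Real.sqrt (∑ r,
        ((∑ J : Finset (Fin n), subsetWeight π J •
            (gbar - (sketchProj Q π J).mulVec gbar + (sketchProj Q π J).mulVec (ghat J))) r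
          - v r) ^ 2) ≤ Real.sqrt n * ε := by
  classical
  set a : Fin n → ℝ := fun i =>
    (1 / π i) * ∑ J : Finset (Fin n),
      (if i ∈ J then subsetWeight π J * (∑ s, Q s i * (ghat J s - v s)) else 0) with ha_def
  have hM : ∑ J : Finset (Fin n), subsetWeight π J • sketchProj Q π J = 1 :=
    expProj_aux Q hQ π hπ
  -- the expectation decomposition
  have hsplit : ∀ J : Finset (Fin n),
      gbar - (sketchProj Q π J).mulVec gbar + (sketchProj Q π J).mulVec (ghat J)
        = gbar + ((sketchProj Q π J).mulVec (fun s => ghat J s - v s)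
            + (sketchProj Q π J).mulVec (fun s => v s - gbar s)) := by
    intro J
    rw [← Matrix.mulVec_add]
    have h1 : ((fun s => ghat J s - v s) + fun s => v s - gbar s) = ghat J - gbar := by
      funext s; simp only [Pi.add_apply, Pi.sub_apply]; ring
    rw [h1, Matrix.mulVec_sub]
    funext s
    simp only [Pi.add_apply, Pi.sub_apply]
    ring
  have h1 : ∑ J : Finset (Fin n),
      subsetWeight π J • (sketchProj Q π J).mulVec (fun s => v s - gbar s) = v - gbar := by
    have h2 : ∑ J : Finset (Fin n),
        subsetWeight π J • (sketchProj Q π J).mulVec (fun s => v s - gbar s)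
        = (∑ J : Finset (Fin n), subsetWeight π J • sketchProj Q π J).mulVec
            (fun s => v s - gbar s) := by
      rw [sum_mulVec_aux]
      exact Finset.sum_congr rfl fun J _ => (Matrix.smul_mulVec _ _ _).symm
    rw [h2, hM, Matrix.one_mulVec]
    funext s; simp
  have hEsum : ∑ J : Finset (Fin n), subsetWeight π J •
        (gbar - (sketchProj Q π J).mulVec gbar + (sketchProj Q π J).mulVec (ghat J))
      = gbar + ((∑ J : Finset (Fin n),
          subsetWeight π J • (sketchProj Q π J).mulVec (fun s => ghat J s - v s))
          + (v - gbar)) := by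
    calc ∑ J : Finset (Fin n), subsetWeight π J •
          (gbar - (sketchProj Q π J).mulVec gbar + (sketchProj Q π J).mulVec (ghat J))
        = ∑ J : Finset (Fin n), (subsetWeight π J • gbar +
            (subsetWeight π J • (sketchProj Q π J).mulVec (fun s => ghat J s - v s)
              + subsetWeight π J • (sketchProj Q π J).mulVec (fun s => v s - gbar s))) := by
          refine Finset.sum_congr rfl fun J _ => ?_
          rw [hsplit J, smul_add, smul_add]
      _ = (∑ J : Finset (Fin n), subsetWeight π J) • gbar +
          ((∑ J : Finset (Fin n),
            subsetWeight π J • (sketchProj Q π J).mulVec (fun s => ghat J s - v s))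
           + ∑ J : Finset (Fin n),
            subsetWeight π J • (sketchProj Q π J).mulVec (fun s => v s - gbar s)) := by
          rw [Finset.sum_add_distrib, Finset.sum_add_distrib, Finset.sum_smul]
      _ = _ := by rw [weight_sum_aux, one_smul, h1]
  -- the error part equals Q.mulVec a
  have hQa : ∑ J : Finset (Fin n),
      subsetWeight π J • (sketchProj Q π J).mulVec (fun s => ghat J s - v s)
      = Q.mulVec a := by
    funext r
    have hPr : ∀ J : Finset (Fin n),
        (sketchProj Q π J).mulVec (fun s => ghat J s - v s) r
          = ∑ i ∈ J, (1 / π i) * ((∑ s, Q s i * (ghat J s - v s)) * Q r i) := by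
      intro J
      unfold sketchProj
      rw [sum_mulVec_aux, Finset.sum_apply]
      refine Finset.sum_congr rfl fun i _ => ?_
      rw [Matrix.smul_mulVec, vecMulVec_mulVec_aux]
      simp only [Pi.smul_apply, smul_eq_mul]
    simp only [Finset.sum_apply, Pi.smul_apply, smul_eq_mul]
    rw [Finset.sum_congr rfl fun J _ => by rw [hPr J]]
    have hswap : ∀ J : Finset (Fin n),
        subsetWeight π J * ∑ i ∈ J, (1 / π i) * ((∑ s, Q s i * (ghat J s - v s)) * Q r i)
          = ∑ i : Fin n, (if i ∈ J then
              Q r i * ((1 / π i) * (subsetWeight π J * (∑ s, Q s i * (ghat J s - v s))))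
            else 0) := by
      intro J
      rw [Finset.sum_ite_mem, Finset.univ_inter, Finset.mul_sum]
      exact Finset.sum_congr rfl fun i _ => by ring
    rw [Finset.sum_congr rfl fun J _ => hswap J, Finset.sum_comm]
    simp only [Matrix.mulVec, dotProduct, ha_def]
    refine Finset.sum_congr rfl fun i _ => ?_
    rw [Finset.mul_sum, Finset.mul_sum]
    refine Finset.sum_congr rfl fun J _ => ?_
    split <;> simp
  have key : ∀ r, (∑ J : Finset (Fin n), subsetWeight π J •
      (gbar - (sketchProj Q π J).mulVec gbar + (sketchProj Q π J).mulVec (ghat J))) r - v r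
      = Q.mulVec a r := by
    intro r
    rw [hEsum]
    simp only [Pi.add_apply, Pi.sub_apply]
    rw [congrFun hQa r]
    ring
  have hsum_eq : ∑ r, ((∑ J : Finset (Fin n), subsetWeight π J •
      (gbar - (sketchProj Q π J).mulVec gbar + (sketchProj Q π J).mulVec (ghat J))) r
        - v r) ^ 2 = ∑ i, a i ^ 2 := by
    rw [Finset.sum_congr rfl fun r _ => by rw [key r]]
    have hdot : dotProduct (Q.mulVec a) (Q.mulVec a) = dotProduct a a := by
      rw [Matrix.dotProduct_mulVec, ← Matrix.mulVec_transpose, Matrix.mulVec_mulVec, hQ,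
        Matrix.one_mulVec]
    simpa [dotProduct, pow_two] using hdot
  -- nonnegativity of weights
  have hpnonneg : ∀ J : Finset (Fin n), 0 ≤ subsetWeight π J := by
    intro J
    unfold subsetWeight
    refine mul_nonneg (Finset.prod_nonneg fun j _ => (hπ j).1.le)
      (Finset.prod_nonneg fun j _ => ?_)
    linarith [(hπ j).2]
  -- coordinatewise bound on a
  have ha : ∀ i, |a i| ≤ ε := by
    intro i
    have hqi : ∑ s, Q s i * Q s i = 1 := by
      have h := congrFun (congrFun hQ i) i
      simpa [Matrix.mul_apply, Matrix.transpose_apply, Matrix.one_apply] using h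
    have hcJ : ∀ J : Finset (Fin n), |∑ s, Q s i * (ghat J s - v s)| ≤ ε := by
      intro J
      have h2 := Finset.sum_mul_sq_le_sq_mul_sq Finset.univ (fun s => Q s i)
        (fun s => ghat J s - v s)
      rw [show (∑ s, Q s i ^ 2) = 1 from by simpa [pow_two] using hqi, one_mul] at h2
      calc |∑ s, Q s i * (ghat J s - v s)|
          = Real.sqrt ((∑ s, Q s i * (ghat J s - v s)) ^ 2) := (Real.sqrt_sq_eq_abs _).symm
        _ ≤ Real.sqrt (∑ s, (ghat J s - v s) ^ 2) := Real.sqrt_le_sqrt h2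
        _ ≤ ε := hacc J
    have habs : |∑ J : Finset (Fin n),
        (if i ∈ J then subsetWeight π J * (∑ s, Q s i * (ghat J s - v s)) else 0)|
          ≤ π i * ε := by
      calc |∑ J : Finset (Fin n),
          (if i ∈ J then subsetWeight π J * (∑ s, Q s i * (ghat J s - v s)) else 0)|
          ≤ ∑ J : Finset (Fin n),
            |if i ∈ J then subsetWeight π J * (∑ s, Q s i * (ghat J s - v s)) else 0| :=
            Finset.abs_sum_le_sum_abs _ _
        _ ≤ ∑ J : Finset (Fin n), (if i ∈ J then subsetWeight π J else 0) * ε := by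
            refine Finset.sum_le_sum fun J _ => ?_
            by_cases h : i ∈ J
            · simp only [if_pos h, abs_mul, abs_of_nonneg (hpnonneg J)]
              exact mul_le_mul_of_nonneg_left (hcJ J) (hpnonneg J)
            · simp [h]
        _ = π i * ε := by rw [← Finset.sum_mul, weight_mem_aux]
    have hπi := (hπ i).1
    simp only [ha_def]
    rw [abs_mul, abs_of_nonneg (by positivity : (0:ℝ) ≤ 1 / π i)]
    calc (1 / π i) * |∑ J : Finset (Fin n),
        (if i ∈ J then subsetWeight π J * (∑ s, Q s i * (ghat J s - v s)) else 0)|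
        ≤ (1 / π i) * (π i * ε) := by
          exact mul_le_mul_of_nonneg_left habs (by positivity)
      _ = ε := by field_simp
  rw [hsum_eq]
  have hle : ∑ i, a i ^ 2 ≤ (n : ℝ) * ε ^ 2 := by
    calc ∑ i, a i ^ 2 ≤ ∑ _i : Fin n, ε ^ 2 := by
          refine Finset.sum_le_sum fun i _ => ?_
          have h := pow_le_pow_left₀ (abs_nonneg (a i)) (ha i) 2
          rwa [sq_abs] at h
      _ = (n : ℝ) * ε ^ 2 := by
          simp [Finset.sum_const, Finset.card_univ, nsmul_eq_mul]
  calc Real.sqrt (∑ i, a i ^ 2) ≤ Real.sqrt ((n : ℝ) * ε ^ 2) := Real.sqrt_le_sqrt hle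
    _ = Real.sqrt n * ε := by
        rw [Real.sqrt_mul (by positivity), Real.sqrt_sq hε]
end
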